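/- Let P be a logic program over a finite set of atoms A and let π be a symmetry of P. Then the map γ defined by γ (a, pos) = (π a, pos), γ (a, neg) = (π a, neg) for a ∈ A, and γ r = r^π for r ∈ P, is a colour-preserving automorphism of the coloured digraph G_P. -/

import Mathlib

/-- A (disjunctive) rule over a set of atoms `A`: a triple of finite sets of atoms
(head, positive body, negative body). -/
structure Rule (A : Type*) where
  head : Finset A
  pos : Finset A
  neg : Finset A
deriving DecidableEq

variable {A : Type*} [DecidableEq A]

/-- `M` is a model of a rule `(H, B⁺, ∅)` (the negative body is ignored; it is used
only on rules of reducts, whose negative bodies are empty): if `B⁺ ⊆ M` then `H ∩ M ≠ ∅`. -/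
def Rule.models (M : Finset A) (r : Rule A) : Prop :=
  r.pos ⊆ M → (r.head ∩ M).Nonempty

/-- The reduct `P^M` of a program `P` relative to `M`. -/
def reduct (P : Finset (Rule A)) (M : Finset A) : Finset (Rule A) :=
  (P.filter fun r => r.neg ∩ M = ∅).image fun r => ⟨r.head, r.pos, ∅⟩

/-- `M` is a ⊆-minimal model of the set of rules `Q`. -/
def IsMinModel (Q : Finset (Rule A)) (M : Finset A) : Prop :=
  (∀ r ∈ Q, Rule.models M r) ∧ ∀ N : Finset A, N ⊂ M → ¬ (∀ r ∈ Q, Rule.models N r)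

/-- `M` is an answer set of `P` if `M` is a ⊆-minimal model of the reduct `P^M`. -/
def IsAnswerSet (P : Finset (Rule A)) (M : Finset A) : Prop :=
  IsMinModel (reduct P M) M

/-- The image of a rule under a permutation of atoms. -/
def Rule.perm (π : Equiv.Perm A) (r : Rule A) : Rule A :=
  ⟨r.head.image π, r.pos.image π, r.neg.image π⟩

/-- The image of a program under a permutation of atoms. -/
def permProg (π : Equiv.Perm A) (P : Finset (Rule A)) : Finset (Rule A) :=
  P.image (Rule.perm π)

/-- A symmetry of a logic program `P` is a permutation of its atoms that does not
change `P`. -/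
def IsSymmetry (π : Equiv.Perm A) (P : Finset (Rule A)) : Prop :=
  permProg π P = P

/-- The vertex set of the coloured digraph `G_P` of a program `P`:
positive/negative literal vertices `(a, pos)`/`(a, neg)` (with `pos = true`,
`neg = false`), plus one vertex for each rule of `P`. -/
def Vertex (A : Type*) (P : Finset (Rule A)) : Type _ :=
  (A × Bool) ⊕ {r : Rule A // r ∈ P}

/-- The colouring of `G_P`: colour 1 for positive-literal vertices, colour 2 for
negative-literal vertices, colour 3 for rule vertices. -/
def colour {A : Type*} {P : Finset (Rule A)} : Vertex A P → Fin 3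
  | Sum.inl (_, true) => 0
  | Sum.inl (_, false) => 1
  | Sum.inr _ => 2

/-- The edge relation of `G_P`: consistency edges `(a, pos) → (a, neg)` for every
atom `a`, and for every rule `r ∈ P` the edges `(b, pos) → r` for `b ∈ pos r`,
`(c, neg) → r` for `c ∈ neg r`, and `r → (a, pos)` for `a ∈ head r`. -/
def Edge {A : Type*} (P : Finset (Rule A)) : Vertex A P → Vertex A P → Prop
  | Sum.inl (a, true), Sum.inl (b, false) => a = b
  | Sum.inl (b, true), Sum.inr r => b ∈ (r : Rule A).pos
  | Sum.inl (c, false), Sum.inr r => c ∈ (r : Rule A).neg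
  | Sum.inr r, Sum.inl (a, true) => a ∈ (r : Rule A).head
  | _, _ => False

/-! The permutation `π` acts on literal vertices directly, and on rule vertices because
`P^π = P`. Every edge of `G_P` expresses a membership `a ∈ S` of an atom in a component `S` of a
rule (or an equality of atoms), and `π a ∈ S^π ↔ a ∈ S` since `π` is injective. -/

lemma Rule.perm_mul (π σ : Equiv.Perm A) (r : Rule A) :
    Rule.perm (π * σ) r = Rule.perm π (Rule.perm σ r) := by
  simp only [Rule.perm, Equiv.Perm.coe_mul, Finset.image_image]

lemma Rule.perm_one (r : Rule A) : Rule.perm 1 r = r := by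
  simp [Rule.perm]

def Rule.permEquiv (π : Equiv.Perm A) : Equiv.Perm (Rule A) where
  toFun := Rule.perm π
  invFun := Rule.perm π⁻¹
  left_inv r := by rw [← Rule.perm_mul, inv_mul_cancel, Rule.perm_one]
  right_inv r := by rw [← Rule.perm_mul, mul_inv_cancel, Rule.perm_one]

lemma Rule.perm_injective (π : Equiv.Perm A) : Function.Injective (Rule.perm π) :=
  (Rule.permEquiv π).injective

lemma Rule.mem_perm_head_iff (π : Equiv.Perm A) (r : Rule A) (a : A) :
    π a ∈ (r.perm π).head ↔ a ∈ r.head :=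
  π.injective.mem_finset_image

lemma Rule.mem_perm_pos_iff (π : Equiv.Perm A) (r : Rule A) (a : A) :
    π a ∈ (r.perm π).pos ↔ a ∈ r.pos :=
  π.injective.mem_finset_image

lemma Rule.mem_perm_neg_iff (π : Equiv.Perm A) (r : Rule A) (a : A) :
    π a ∈ (r.perm π).neg ↔ a ∈ r.neg :=
  π.injective.mem_finset_image

namespace IsSymmetry

variable {π : Equiv.Perm A} {P : Finset (Rule A)}

lemma perm_mem_iff (hπ : IsSymmetry π P) (r : Rule A) : r.perm π ∈ P ↔ r ∈ P := by
  constructor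
  · intro h
    rw [← hπ] at h
    obtain ⟨s, hs, hsr⟩ := Finset.mem_image.mp h
    rwa [← Rule.perm_injective π hsr]
  · intro h
    rw [← hπ]
    exact Finset.mem_image_of_mem _ h

def vertexPerm (hπ : IsSymmetry π P) : Equiv.Perm (Vertex A P) :=
  Equiv.sumCongr (Equiv.prodCongr π (Equiv.refl Bool))
    (Equiv.subtypeEquiv (Rule.permEquiv π) fun r => (hπ.perm_mem_iff r).symm)

lemma vertexPerm_inl (hπ : IsSymmetry π P) (a : A) (b : Bool) :
    hπ.vertexPerm (Sum.inl (a, b)) = Sum.inl (π a, b) :=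
  rfl

lemma vertexPerm_inr (hπ : IsSymmetry π P) (r : {r : Rule A // r ∈ P}) :
    hπ.vertexPerm (Sum.inr r) = Sum.inr ⟨(r : Rule A).perm π, (hπ.perm_mem_iff r).2 r.2⟩ :=
  rfl

lemma colour_vertexPerm (hπ : IsSymmetry π P) (v : Vertex A P) :
    colour (hπ.vertexPerm v) = colour v := by
  rcases v with ⟨a, _ | _⟩ | r <;> rfl

lemma edge_vertexPerm_iff (hπ : IsSymmetry π P) (u v : Vertex A P) :
    Edge P (hπ.vertexPerm u) (hπ.vertexPerm v) ↔ Edge P u v := by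
  rcases u with ⟨a, _ | _⟩ | r <;> rcases v with ⟨b, _ | _⟩ | s <;>
    simp only [Edge, vertexPerm_inl, vertexPerm_inr, Rule.mem_perm_head_iff,
      Rule.mem_perm_pos_iff, Rule.mem_perm_neg_iff, π.injective.eq_iff]

end IsSymmetry

theorem symmetry_induces_graph_automorphism_general {A : Type*} [DecidableEq A]
    (P : Finset (Rule A)) (π : Equiv.Perm A) (hπ : IsSymmetry π P) :
    ∃ γ : Vertex A P ≃ Vertex A P,
      (∀ (a : A) (b : Bool), γ (Sum.inl (a, b)) = Sum.inl (π a, b)) ∧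
      (∀ (r : Rule A) (hr : r ∈ P) (hr' : Rule.perm π r ∈ P),
        γ (Sum.inr ⟨r, hr⟩) = Sum.inr ⟨Rule.perm π r, hr'⟩) ∧
      (∀ v : Vertex A P, colour (γ v) = colour v) ∧
      (∀ u v : Vertex A P, Edge P u v ↔ Edge P (γ u) (γ v)) :=
  ⟨hπ.vertexPerm, hπ.vertexPerm_inl, fun r hr _ => hπ.vertexPerm_inr ⟨r, hr⟩,
    hπ.colour_vertexPerm, fun u v => (hπ.edge_vertexPerm_iff u v).symm⟩

/-- **Symmetries of `P` induce coloured-digraph automorphisms of `G_P`.**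
If `π` is a symmetry of a logic program `P` over a finite set of atoms `A`, then the
map `γ` defined by `γ (a, pos) = (π a, pos)`, `γ (a, neg) = (π a, neg)` and
`γ r = r^π` is a colour-preserving automorphism of the coloured digraph `G_P`. -/
theorem symmetry_induces_graph_automorphism {A : Type*} [DecidableEq A] [Fintype A]
    (P : Finset (Rule A)) (π : Equiv.Perm A) (hπ : IsSymmetry π P) :
    ∃ γ : Vertex A P ≃ Vertex A P,
      (∀ (a : A) (b : Bool), γ (Sum.inl (a, b)) = Sum.inl (π a, b)) ∧
      (∀ (r : Rule A) (hr : r ∈ P) (hr' : Rule.perm π r ∈ P),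
        γ (Sum.inr ⟨r, hr⟩) = Sum.inr ⟨Rule.perm π r, hr'⟩) ∧
      (∀ v : Vertex A P, colour (γ v) = colour v) ∧
      (∀ u v : Vertex A P, Edge P u v ↔ Edge P (γ u) (γ v)) :=
  symmetry_induces_graph_automorphism_general P π hπ
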